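/- Let n ≥ 1, let Δ_n = {x ∈ ℝ^n : x_i > 0 for all i and Σ_{i=1}^n x_i < 1}, and let S(ω) = (−i/√(2π))^n Σ_{r=0}^n e^{−i ω_r} / ∏_{r'≠r} (ω_{r'} − ω_r) (with ω_0 = 0), defined on the open set Ω of those ω ∈ ℝ^n whose components are nonzero and pairwise distinct. Then for every weight vector w ∈ ℝ^n and every ω ∈ Ω, the Fourier transform of the function x ↦ (w ⋅ x)·1_{Δ_n}(x) at ω equals i Σ_{j=1}^n w_j ∂S/∂ω_j (ω), where the partial derivatives of S are taken on Ω. -/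

import Mathlib

/-!
Write `F_n(ω) = ∫_{Δ_n} e^{-i x⋅ω} dx`. Integrating out the first coordinate gives
`i a F_{n+1}(a, ν) = F_n(ν) - e^{-i a} F_n(ν - a)`, which is the recurrence of divided
differences of `t ↦ e^{-i t}`; hence `F_n(ω) = i^n e^{-i·}[0, ω_1, …, ω_n]` on `Ω` (the
Hermite–Genocchi formula). The sum defining `S` is `(-1)^n` times this divided difference, so
`S = (2π)^{-n/2} F_n` on the open set `Ω`, and differentiating `F_n` under the integral sign in
the direction `w` brings down the factor `-i (w⋅x)`.
-/

open MeasureTheory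

/-- The function `S(ω) = (−i/√(2π))^n Σ_{r=0}^n e^{−i ω_r} / ∏_{r'≠r} (ω_{r'} − ω_r)`,
with `ω_0 = 0` adjoined as the zeroth extended component.  (In Lean, division by zero
is zero, so this formula defines a total function; on the open set `Ω` of frequencies
with nonzero pairwise distinct components it agrees with the intended `S`.) -/
noncomputable def Sfun {n : ℕ} (ω : Fin n → ℝ) : ℂ :=
  (-Complex.I / (Real.sqrt (2 * Real.pi) : ℂ)) ^ n *
    ∑ r : Fin (n + 1),
      Complex.exp (-Complex.I * ((Matrix.vecCons (0 : ℝ) ω r : ℝ) : ℂ)) /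
        ((∏ r' ∈ Finset.univ.erase r,
            (Matrix.vecCons (0 : ℝ) ω r' - Matrix.vecCons (0 : ℝ) ω r) : ℝ) : ℂ)

open Finset Complex

section DividedDifference

variable {K E : Type*} [Field K] [DecidableEq K] [AddCommGroup E] [Module K E]

def dividedDiff (g : K → E) (s : Finset K) : E :=
  ∑ a ∈ s, (∏ b ∈ s.erase a, (a - b))⁻¹ • g a

@[simp]
theorem dividedDiff_singleton (g : K → E) (a : K) : dividedDiff g {a} = g a := by
  simp [dividedDiff]

theorem dividedDiff_erase (g : K → E) {s : Finset K} {b : K} (hb : b ∈ s) :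
    dividedDiff g (s.erase b) = dividedDiff (fun x => (x - b) • g x) s := by
  rw [dividedDiff, dividedDiff,
    ← sum_erase s (show (∏ c ∈ s.erase b, (b - c))⁻¹ • (b - b) • g b = 0 by simp)]
  refine sum_congr rfl fun x hx => ?_
  have hxb : x - b ≠ 0 := sub_ne_zero.2 (ne_of_mem_erase hx)
  rw [← mul_prod_erase (s.erase x) (x - ·) (mem_erase.2 ⟨(ne_of_mem_erase hx).symm, hb⟩),
    erase_right_comm, smul_smul, mul_inv, mul_right_comm, inv_mul_cancel₀ hxb, one_mul]

theorem sub_smul_dividedDiff (g : K → E) {s : Finset K} {a b : K} (ha : a ∈ s) (hb : b ∈ s) :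
    (b - a) • dividedDiff g s = dividedDiff g (s.erase a) - dividedDiff g (s.erase b) := by
  rw [dividedDiff_erase g ha, dividedDiff_erase g hb, dividedDiff, dividedDiff, dividedDiff,
    smul_sum, ← sum_sub_distrib]
  refine sum_congr rfl fun x _ => ?_
  rw [smul_comm, ← smul_sub, ← sub_smul, sub_sub_sub_cancel_left]

theorem dividedDiff_image_add_const (g : K → E) (s : Finset K) (c : K) :
    dividedDiff g (s.image (· + c)) = dividedDiff (fun x => g (x + c)) s := by
  have hinj : Function.Injective (· + c : K → K) := add_left_injective c
  rw [dividedDiff, sum_image fun x _ y _ h => hinj h]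
  refine sum_congr rfl fun x _ => ?_
  rw [← image_erase hinj, prod_image fun x _ y _ h => hinj h]
  simp only [add_sub_add_right_eq_sub]

theorem dividedDiff_const_smul {R : Type*} [Monoid R] [DistribMulAction R E]
    [SMulCommClass K R E] (g : K → E) (s : Finset K) (c : R) :
    dividedDiff (fun x => c • g x) s = c • dividedDiff g s := by
  simp only [dividedDiff, smul_sum]
  exact sum_congr rfl fun x _ => smul_comm _ _ _

theorem sum_inv_prod_sub_smul_eq_dividedDiff {ι : Type*} [Fintype ι] [DecidableEq ι]
    (g : K → E) {η : ι → K} (hη : Function.Injective η) :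
    ∑ r, (∏ r' ∈ univ.erase r, (η r - η r'))⁻¹ • g (η r) =
      dividedDiff g (univ.image η) := by
  rw [dividedDiff, sum_image fun x _ y _ h => hη h]
  refine sum_congr rfl fun r _ => ?_
  rw [← image_erase hη, prod_image fun x _ y _ h => hη h]

end DividedDifference

theorem Matrix.image_univ_vecCons {α : Type*} [DecidableEq α] {n : ℕ} (a : α)
    (f : Fin n → α) :
    univ.image (Matrix.vecCons a f) = insert a (univ.image f) := by
  ext x
  simp [Fin.exists_fin_succ, eq_comm]

theorem Matrix.vecCons_injective_iff {α : Type*} {n : ℕ} {a : α} {f : Fin n → α} :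
    Function.Injective (Matrix.vecCons a f) ↔ a ∉ Set.range f ∧ Function.Injective f :=
  Fin.cons_injective_iff

theorem isOpen_setOf_injective {ι X : Type*} [Finite ι] [TopologicalSpace X] [T2Space X] :
    IsOpen {f : ι → X | Function.Injective f} := by
  have h : {f : ι → X | Function.Injective f} = ⋂ i, ⋂ j, {f | i ≠ j → f i ≠ f j} := by
    ext f
    simp [Function.Injective, not_imp_not]
  rw [h]
  refine isOpen_iInter_of_finite fun i => isOpen_iInter_of_finite fun j => ?_
  by_cases hij : i = j
  · simp [hij]
  · simpa [hij] using isOpen_ne_fun (continuous_apply i) (continuous_apply j)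

theorem integral_eq_integral_integral_vecCons {n : ℕ} {E : Type*} [NormedAddCommGroup E]
    [NormedSpace ℝ E] {g : (Fin (n + 1) → ℝ) → E} (hg : Integrable g) :
    ∫ x, g x = ∫ y : Fin n → ℝ, ∫ t : ℝ, g (Matrix.vecCons t y) := by
  have he := (volume_preserving_piFinSuccAbove (fun _ : Fin (n + 1) => ℝ) 0).symm
  have hcons (p : ℝ × (Fin n → ℝ)) :
      (MeasurableEquiv.piFinSuccAbove (fun _ => ℝ) 0).symm p = Matrix.vecCons p.1 p.2 := by
    simp [MeasurableEquiv.piFinSuccAbove_symm_apply, Fin.insertNthEquiv, Matrix.vecCons]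
  have hg' := (he.integrable_comp_emb (MeasurableEquiv.measurableEmbedding _)).2 hg
  simp only [Function.comp_def, hcons, Measure.volume_eq_prod] at hg'
  rw [← he.integral_comp', Measure.volume_eq_prod]
  simp only [hcons]
  exact integral_prod_symm _ hg'

theorem integral_Ioo_cexp_neg_I_mul {a L : ℝ} (ha : a ≠ 0) (hL : 0 ≤ L) :
    ∫ t in Set.Ioo 0 L, cexp (-I * (a * t)) = (1 - cexp (-I * (a * L))) / (I * a) := by
  have hc : -I * a ≠ 0 := mul_ne_zero (neg_ne_zero.2 I_ne_zero) (ofReal_ne_zero.2 ha)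
  simp_rw [← mul_assoc]
  rw [← integral_Ioc_eq_integral_Ioo, ← intervalIntegral.integral_of_le hL,
    integral_exp_mul_complex hc]
  field_simp
  simp
  ring

theorem hasFDerivAt_integral_cexp_neg_I_mul {α F : Type*} [MeasurableSpace α] {μ : Measure α}
    [IsFiniteMeasure μ] [NormedAddCommGroup F] [NormedSpace ℝ F] {ℓ : α → F →L[ℝ] ℝ}
    (hℓ : Integrable ℓ μ) (ω : F) :
    HasFDerivAt (fun ω => ∫ x, cexp (-I * ℓ x ω) ∂μ)
      (∫ x, cexp (-I * ℓ x ω) • -I • (ofRealCLM ∘L ℓ x) ∂μ) ω := by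
  have hmeas (ω : F) : AEStronglyMeasurable (fun x => cexp (-I * ℓ x ω)) μ :=
    (by fun_prop : Continuous fun L : F →L[ℝ] ℝ => cexp (-I * L ω)).comp_aestronglyMeasurable
      hℓ.aestronglyMeasurable
  have hnorm (ω : F) (x : α) : ‖cexp (-I * ℓ x ω)‖ = 1 := by
    simp [norm_exp]
  refine hasFDerivAt_integral_of_dominated_of_fderiv_le (s := Set.univ)
    (bound := fun x => ‖ℓ x‖)
    (F' := fun ω x => cexp (-I * ℓ x ω) • -I • (ofRealCLM ∘L ℓ x))
    Filter.univ_mem (Filter.Eventually.of_forall hmeas)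
    (Integrable.of_bound (hmeas ω) 1 (ae_of_all _ fun x => (hnorm ω x).le))
    ((by fun_prop : Continuous fun L : F →L[ℝ] ℝ =>
        cexp (-I * L ω) • -I • (ofRealCLM ∘L L)).comp_aestronglyMeasurable
      hℓ.aestronglyMeasurable)
    (ae_of_all _ fun x ω' _ => ?_) hℓ.norm (ae_of_all _ fun x ω' _ => ?_)
  · rw [norm_smul, norm_smul, hnorm, norm_neg, norm_I, one_mul, one_mul]
    exact (ContinuousLinearMap.opNorm_comp_le _ _).trans (by rw [ofRealCLM_norm, one_mul])
  · exact ((ofRealCLM ∘L ℓ x).hasFDerivAt.const_mul (-I)).cexp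

def openSimplex (n : ℕ) : Set (Fin n → ℝ) := {x | (∀ i, 0 < x i) ∧ ∑ i, x i < 1}

section OpenSimplex

variable {n : ℕ} {E : Type*} [NormedAddCommGroup E]

theorem isOpen_openSimplex (n : ℕ) : IsOpen (openSimplex n) := by
  simp only [openSimplex, Set.ofPred_and, Set.ofPred_forall]
  exact (isOpen_iInter_of_finite fun i => isOpen_lt continuous_const (continuous_apply i)).inter
    (isOpen_lt (continuous_finsetSum _ fun i _ => continuous_apply i) continuous_const)

theorem openSimplex_subset_Icc : openSimplex n ⊆ Set.Icc 0 1 := fun _ hx =>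
  ⟨fun i => (hx.1 i).le, fun i =>
    (single_le_sum (fun j _ => (hx.1 j).le) (mem_univ i)).trans hx.2.le⟩

theorem Continuous.integrableOn_openSimplex {f : (Fin n → ℝ) → E} (hf : Continuous f) :
    IntegrableOn f (openSimplex n) :=
  hf.integrableOn_Icc.mono_set openSimplex_subset_Icc

instance isFiniteMeasure_restrict_openSimplex : IsFiniteMeasure (volume.restrict (openSimplex n)) :=
  isFiniteMeasure_restrict.2 <|
    ne_top_of_le_ne_top isCompact_Icc.measure_lt_top.ne (measure_mono openSimplex_subset_Icc)

theorem vecCons_mem_openSimplex {t : ℝ} {y : Fin n → ℝ} :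
    Matrix.vecCons t y ∈ openSimplex (n + 1) ↔
      y ∈ openSimplex n ∧ t ∈ Set.Ioo 0 (1 - ∑ i, y i) := by
  simp only [openSimplex, Set.mem_ofPred_eq, Fin.forall_fin_succ, Fin.sum_univ_succ,
    Matrix.cons_val_zero, Matrix.cons_val_succ, Set.mem_Ioo]
  constructor
  · rintro ⟨⟨ht, hy⟩, hsum⟩
    have := sum_nonneg fun i (_ : i ∈ univ) => (hy i).le
    exact ⟨⟨hy, by linarith⟩, ht, by linarith⟩
  · rintro ⟨⟨hy, -⟩, ht, hsum⟩
    exact ⟨⟨ht, hy⟩, by linarith⟩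

theorem setIntegral_openSimplex_succ [NormedSpace ℝ E] {f : (Fin (n + 1) → ℝ) → E}
    (hf : IntegrableOn f (openSimplex (n + 1))) :
    ∫ x in openSimplex (n + 1), f x =
      ∫ y in openSimplex n, ∫ t in Set.Ioo 0 (1 - ∑ i, y i), f (Matrix.vecCons t y) := by
  have hmeas := (isOpen_openSimplex (n + 1)).measurableSet
  have hmeas' := (isOpen_openSimplex n).measurableSet
  have hslice (y : Fin n → ℝ) : ∫ t, (openSimplex (n + 1)).indicator f (Matrix.vecCons t y) =
      (openSimplex n).indicator
        (fun y => ∫ t in Set.Ioo 0 (1 - ∑ i, y i), f (Matrix.vecCons t y)) y := by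
    by_cases hy : y ∈ openSimplex n
    · simp only [Set.indicator_of_mem hy, ← integral_indicator measurableSet_Ioo]
      congr 1 with t
      simp only [Set.indicator, vecCons_mem_openSimplex, hy, true_and]
    · simp [Set.indicator, vecCons_mem_openSimplex, hy]
  rw [← integral_indicator hmeas,
    integral_eq_integral_integral_vecCons ((integrable_indicator_iff hmeas).2 hf)]
  simp only [hslice, integral_indicator hmeas']

end OpenSimplex

noncomputable def simplexFourier (n : ℕ) (ω : Fin n → ℝ) : ℂ :=
  ∫ x in openSimplex n, cexp (-I * ↑(∑ i, x i * ω i))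

theorem simplexFourier_vecCons {n : ℕ} {a : ℝ} (ha : a ≠ 0) (ν : Fin n → ℝ) :
    simplexFourier (n + 1) (Matrix.vecCons a ν) =
      (simplexFourier n ν - cexp (-I * a) * simplexFourier n (fun i => ν i - a)) / (I * a) := by
  have hint (ν : Fin n → ℝ) :
      IntegrableOn (fun y => cexp (-I * ↑(∑ i, y i * ν i))) (openSimplex n) :=
    Continuous.integrableOn_openSimplex (by fun_prop)
  rw [simplexFourier,
    setIntegral_openSimplex_succ (Continuous.integrableOn_openSimplex (by fun_prop)),
    setIntegral_congr_fun (isOpen_openSimplex n).measurableSet (g := fun y =>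
      (cexp (-I * ↑(∑ i, y i * ν i)) -
        cexp (-I * a) * cexp (-I * ↑(∑ i, y i * (ν i - a)))) / (I * a)),
    integral_div, integral_sub (hint _) ((hint _).const_mul _), integral_const_mul]
  · rfl
  intro y hy
  have hL : 0 ≤ 1 - ∑ i, y i := by linarith [hy.2]
  have hsplit (t : ℝ) : cexp (-I * ↑(∑ i, Matrix.vecCons t y i * Matrix.vecCons a ν i)) =
      cexp (-I * ↑(∑ i, y i * ν i)) * cexp (-I * (a * t)) := by
    rw [← exp_add, Fin.sum_univ_succ]
    simp only [Matrix.cons_val_zero, Matrix.cons_val_succ]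
    push_cast
    ring_nf
  have hshift : cexp (-I * ↑(∑ i, y i * ν i)) * cexp (-I * (a * ↑(1 - ∑ i, y i))) =
      cexp (-I * a) * cexp (-I * ↑(∑ i, y i * (ν i - a))) := by
    rw [← exp_add, ← exp_add]
    simp only [mul_sub, sum_sub_distrib, ← sum_mul]
    push_cast
    ring_nf
  simp only [hsplit, integral_const_mul, integral_Ioo_cexp_neg_I_mul ha hL, mul_div_assoc',
    mul_sub, mul_one, hshift]

theorem dividedDiff_cexp_vecCons {n : ℕ} {a : ℝ} {ν : Fin n → ℝ}
    (hη : Function.Injective (Matrix.vecCons 0 (Matrix.vecCons a ν))) :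
    a * dividedDiff (fun t : ℝ => cexp (-I * t))
        (univ.image (Matrix.vecCons 0 (Matrix.vecCons a ν))) =
      cexp (-I * a) * dividedDiff (fun t : ℝ => cexp (-I * t))
          (univ.image (Matrix.vecCons 0 fun i => ν i - a)) -
        dividedDiff (fun t : ℝ => cexp (-I * t)) (univ.image (Matrix.vecCons 0 ν)) := by
  simp only [Matrix.vecCons_injective_iff, Matrix.range_cons, Set.mem_union,
    Set.mem_singleton_iff, not_or] at hη
  obtain ⟨⟨h0a, h0ν⟩, haν, -⟩ := hη
  have hs : univ.image (Matrix.vecCons 0 (Matrix.vecCons a ν)) =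
      insert 0 (insert a (univ.image ν)) := by
    simp only [Matrix.image_univ_vecCons]
  have herase_a : (insert 0 (insert a (univ.image ν))).erase a =
      univ.image (Matrix.vecCons 0 ν) := by
    rw [erase_insert_of_ne h0a, erase_insert (by simpa using haν), Matrix.image_univ_vecCons]
  have herase_0 : (insert 0 (insert a (univ.image ν))).erase 0 =
      (univ.image (Matrix.vecCons 0 fun i => ν i - a)).image (· + a) := by
    rw [erase_insert]
    · simp [Matrix.image_univ_vecCons, image_image, Function.comp_def]
    · simp only [mem_insert, mem_image, mem_univ, true_and, not_or, not_exists]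
      exact ⟨h0a, fun i hi => h0ν ⟨i, hi⟩⟩
  have hshift :
      (fun t : ℝ => cexp (-I * ↑(t + a))) = fun t : ℝ => cexp (-I * a) • cexp (-I * t) := by
    ext t
    simp only [smul_eq_mul, ← exp_add]
    push_cast
    ring_nf
  have hrec := sub_smul_dividedDiff (fun t : ℝ => cexp (-I * t))
    (s := insert 0 (insert a (univ.image ν))) (a := 0) (b := a)
    (mem_insert_self 0 _) (mem_insert_of_mem (mem_insert_self a _))
  rwa [herase_a, herase_0, dividedDiff_image_add_const, hshift, dividedDiff_const_smul, sub_zero,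
    Complex.real_smul, smul_eq_mul, ← hs] at hrec

theorem simplexFourier_eq_dividedDiff {n : ℕ} {ω : Fin n → ℝ}
    (hω : Function.Injective (Matrix.vecCons 0 ω)) :
    simplexFourier n ω =
      I ^ n * dividedDiff (fun t : ℝ => cexp (-I * t)) (univ.image (Matrix.vecCons 0 ω)) := by
  induction n with
  | zero => simp [simplexFourier, openSimplex, volume_pi, Measure.real]
  | succ n ih =>
    obtain ⟨a, ν, rfl⟩ : ∃ a ν, ω = Matrix.vecCons a ν :=
      ⟨_, _, (Matrix.cons_head_tail ω).symm⟩
    have hrec := dividedDiff_cexp_vecCons hω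
    simp only [Matrix.vecCons_injective_iff, Matrix.range_cons, Set.mem_union,
      Set.mem_singleton_iff, not_or] at hω
    obtain ⟨⟨h0a, h0ν⟩, haν, hν⟩ := hω
    have hν₀ : Function.Injective (Matrix.vecCons 0 ν) :=
      Matrix.vecCons_injective_iff.2 ⟨h0ν, hν⟩
    have hνa : Function.Injective (Matrix.vecCons 0 fun i => ν i - a) :=
      Matrix.vecCons_injective_iff.2
        ⟨fun ⟨i, hi⟩ => haν ⟨i, by linarith⟩, fun i j h => hν (sub_left_inj.1 h)⟩
    rw [simplexFourier_vecCons (Ne.symm h0a), ih hν₀, ih hνa,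
      div_eq_iff (by simp [Ne.symm h0a])]
    linear_combination I ^ n * hrec - I ^ n * a * dividedDiff (fun t : ℝ => cexp (-I * t))
      (univ.image (Matrix.vecCons 0 (Matrix.vecCons a ν))) * I_sq

theorem hasFDerivAt_simplexFourier (n : ℕ) (ω : Fin n → ℝ) :
    HasFDerivAt (simplexFourier n)
      (∫ x in openSimplex n, cexp (-I * ↑(∑ i, x i * ω i)) • -I •
        (ofRealCLM ∘L ∑ i, x i • ContinuousLinearMap.proj i)) ω := by
  have hℓ : Continuous fun x : Fin n → ℝ =>
      ∑ i, x i • (ContinuousLinearMap.proj i : (Fin n → ℝ) →L[ℝ] ℝ) := by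
    fun_prop
  have hℓ_apply (x ω : Fin n → ℝ) :
      (∑ i, x i • (ContinuousLinearMap.proj i : (Fin n → ℝ) →L[ℝ] ℝ)) ω =
        ∑ i, x i * ω i := by
    simp
  have h := hasFDerivAt_integral_cexp_neg_I_mul hℓ.integrableOn_openSimplex ω
  simp only [hℓ_apply] at h
  exact h

theorem fderiv_simplexFourier_apply (n : ℕ) (ω v : Fin n → ℝ) :
    fderiv ℝ (simplexFourier n) ω v =
      -I * ∫ x in openSimplex n, ↑(∑ j, v j * x j) * cexp (-I * ↑(∑ i, x i * ω i)) := by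
  rw [(hasFDerivAt_simplexFourier n ω).fderiv,
    ContinuousLinearMap.integral_apply
      (Continuous.integrableOn_openSimplex (by fun_prop)).integrable,
    ← integral_const_mul]
  congr 1 with x
  simp [mul_comm]
  ring

theorem Sfun_eq_simplexFourier {n : ℕ} {ω : Fin n → ℝ}
    (hω : Function.Injective (Matrix.vecCons 0 ω)) :
    Sfun ω = (1 / (Real.sqrt (2 * Real.pi) : ℂ)) ^ n * simplexFourier n ω := by
  have hterm (η : Fin (n + 1) → ℝ) (r : Fin (n + 1)) :
      cexp (-I * ↑(η r)) / ↑(∏ r' ∈ univ.erase r, (η r' - η r)) =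
        (-1) ^ n * ((∏ r' ∈ univ.erase r, (η r - η r'))⁻¹ • cexp (-I * ↑(η r))) := by
    simp_rw [← neg_sub (η r), prod_neg, card_erase_of_mem (mem_univ r), card_univ,
      Fintype.card_fin, add_tsub_cancel_right]
    rw [Complex.real_smul, div_eq_mul_inv]
    push_cast
    rw [mul_inv, ← inv_pow, inv_neg_one]
    ring
  rw [Sfun, simplexFourier_eq_dividedDiff hω, ← sum_inv_prod_sub_smul_eq_dividedDiff _ hω]
  simp only [hterm, ← mul_sum]
  rw [← mul_assoc, ← mul_pow]
  ring

theorem fourier_linear_indicator_simplex_general {n : ℕ}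
    (w : Fin n → ℝ) (ω : Fin n → ℝ)
    (hΩ : Function.Injective (Matrix.vecCons (0 : ℝ) ω)) :
    (1 / (Real.sqrt (2 * Real.pi) : ℂ)) ^ n *
        ∫ x in {x : Fin n → ℝ | (∀ i, 0 < x i) ∧ ∑ i, x i < 1},
          ((∑ j, w j * x j : ℝ) : ℂ) * Complex.exp (-Complex.I * ((∑ i, x i * ω i : ℝ) : ℂ)) =
      Complex.I * ∑ j, (w j : ℂ) * fderiv ℝ Sfun ω (Pi.single j 1) := by
  have hS : Sfun =ᶠ[nhds ω] fun ω' =>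
      (1 / (Real.sqrt (2 * Real.pi) : ℂ)) ^ n * simplexFourier n ω' :=
    Filter.mem_of_superset ((isOpen_setOf_injective.preimage
        (continuous_const.matrixVecCons continuous_id)).mem_nhds hΩ)
      fun ω' hω' => Sfun_eq_simplexFourier hω'
  have hw : ∑ j, (w j : ℂ) * fderiv ℝ Sfun ω (Pi.single j 1) = fderiv ℝ Sfun ω w := by
    conv_rhs => rw [← univ_sum_single w]
    rw [map_sum]
    refine sum_congr rfl fun j _ => ?_
    rw [← Complex.real_smul, ← map_smul, ← Pi.single_smul', smul_eq_mul, mul_one]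
  rw [hw, hS.fderiv_eq, fderiv_const_mul (hasFDerivAt_simplexFourier n ω).differentiableAt,
    smul_apply, smul_eq_mul, fderiv_simplexFourier_apply, mul_left_comm, ← mul_assoc I, mul_neg,
    I_mul_I, neg_neg, one_mul]
  rfl

/-- The Fourier transform of `x ↦ (w ⋅ x) · 1_{Δ_n}(x)` at any `ω ∈ Ω` (nonzero,
pairwise distinct components, encoded by injectivity of the extension of `ω` by
`ω_0 = 0`) equals `i Σ_j w_j ∂S/∂ω_j(ω)`. -/
theorem fourier_linear_indicator_simplex {n : ℕ} (hn : 1 ≤ n)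
    (w : Fin n → ℝ) (ω : Fin n → ℝ)
    (hΩ : Function.Injective (Matrix.vecCons (0 : ℝ) ω)) :
    (1 / (Real.sqrt (2 * Real.pi) : ℂ)) ^ n *
        ∫ x in {x : Fin n → ℝ | (∀ i, 0 < x i) ∧ ∑ i, x i < 1},
          ((∑ j, w j * x j : ℝ) : ℂ) * Complex.exp (-Complex.I * ((∑ i, x i * ω i : ℝ) : ℂ)) =
      Complex.I * ∑ j, (w j : ℂ) * fderiv ℝ Sfun ω (Pi.single j 1) :=
  fourier_linear_indicator_simplex_general w ω hΩ
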